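/- Stationarity of shifted samples: if X₁, X₂, … is generated by a stationary ergodic process and s ≥ 1 is fixed, then the process X_s, X_{s+1}, … has the same distribution, and consequently for each cylinder B, ν((X_s,…,X_{s+k}),B) → ρ_X(B) almost surely as k → ∞, uniformly over finitely many values of s in the sense that for any J cylinders and any ε > 0 there is a.s. a K such that for all k > K and all s ≤ γk the deviation is at most ε. -/

import Mathlib

/-!
The `s`-shifted sample is `shift^[s] x`, and `shift` preserves `μ`. Birkhoff's ergodic theorem for
the indicator of a cylinder `B`, written as `|S_n - n μ(B)| ≤ δ n + R_δ` for all `n` (with `S_n` the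
Birkhoff sums), bounds a window sum `S_{s+w} - S_s - w μ(B)` by `2δ (s + w) + 2 R_δ`; this is at
most `ε w` as soon as the window length `w` is a fixed fraction of `s + w` and `s + w` is large.
The constraint `s ≤ γ k` makes the window of `nu (k - s)` such a fraction, namely `(1 - γ) / 2`.

Birkhoff's theorem itself comes from the maximal ergodic theorem: if `∫ g < 0`, the set where the
Birkhoff sums of `g` are unbounded above is invariant, and it cannot have full measure, since then
the maximal ergodic theorem would give `∫ g ≥ 0`.
-/

open MeasureTheory Filter Topology

/-- Empirical sliding-window frequency of the (cylinder) set `S` of dimension `l`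
in the sample given by the first `n` values of `X`. -/
noncomputable def nu (n : ℕ) (X : ℕ → ℝ) (l : ℕ) (S : Set (ℕ → ℝ)) : ℝ :=
  if l ≤ n ∧ 1 ≤ l then
    (∑ i ∈ Finset.range (n - l + 1),
      S.indicator (fun _ => (1 : ℝ)) (fun j => X (i + j))) / (n - l + 1)
  else 0

/-- A finite-dimensional cylinder with rational endpoints. -/
structure Cylinder where
  dim : ℕ
  dimPos : 0 < dim
  a : Fin dim → ℚ
  b : Fin dim → ℚ

/-- The subset of `ℕ → ℝ` determined by a cylinder (it constrains the first `dim`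
coordinates to lie in the corresponding rational-endpoint intervals). -/
def Cylinder.set (C : Cylinder) : Set (ℕ → ℝ) :=
  {x | ∀ j : Fin C.dim, (C.a j : ℝ) ≤ x j.val ∧ x j.val ≤ (C.b j : ℝ)}

/-- Distributional distance between two process measures. -/
noncomputable def dd (w : ℕ → ℝ) (B : ℕ → Cylinder) (μ ν : Measure (ℕ → ℝ)) : ℝ :=
  ∑' i, w i * |(μ (B i).set).toReal - (ν (B i).set).toReal|

/-- Empirical distributional distance between two finite samples. -/
noncomputable def dhat (w : ℕ → ℝ) (B : ℕ → Cylinder)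
    (n : ℕ) (X : ℕ → ℝ) (m : ℕ) (Y : ℕ → ℝ) : ℝ :=
  ∑' i, w i * |nu n X (B i).dim (B i).set - nu m Y (B i).dim (B i).set|

/-- One-sample empirical distributional distance to a known process measure. -/
noncomputable def dhat1 (w : ℕ → ℝ) (B : ℕ → Cylinder)
    (n : ℕ) (X : ℕ → ℝ) (ρ : Measure (ℕ → ℝ)) : ℝ :=
  ∑' i, w i * |nu n X (B i).dim (B i).set - (ρ (B i).set).toReal|

/-- The left shift on `ℕ → ℝ`. -/
def shift : (ℕ → ℝ) → (ℕ → ℝ) := fun x n => x (n + 1)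

/-- Concatenation of a word of length `k` with another word. -/
def conc (k : ℕ) (x y : ℕ → ℝ) : ℕ → ℝ := fun i => if i < k then x i else y (i - k)

open Set

section Birkhoff

variable {α : Type*} {T : α → α} {g : α → ℝ}

lemma partialSups_birkhoffSum_succ (N : ℕ) :
    partialSups (birkhoffSum T g) (N + 1) =
      partialSups (birkhoffSum T g) N ⊔ birkhoffSum T g (N + 1) := by
  rw [← Order.succ_eq_add_one, partialSups_succ]

lemma partialSups_birkhoffSum_le_add {N : ℕ} {x : α}
    (hx : 0 < partialSups (birkhoffSum T g) N x) :
    partialSups (birkhoffSum T g) N x ≤ g x + partialSups (birkhoffSum T g) N (T x) := by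
  rw [Pi.partialSups_apply] at hx ⊢
  obtain ⟨n, hnN, hn⟩ := exists_partialSups_eq (birkhoffSum T g · x) N
  rw [hn] at hx ⊢
  cases n with
  | zero => simp at hx
  | succ m =>
    rw [birkhoffSum_succ', Pi.partialSups_apply]
    gcongr
    exact le_partialSups_of_le (birkhoffSum T g · (T x)) (by omega)

lemma lt_partialSups_birkhoffSum_iff {N : ℕ} {x : α} :
    0 < partialSups (birkhoffSum T g) N x ↔ ∃ n ≤ N, 0 < birkhoffSum T g n x := by
  rw [Pi.partialSups_apply]
  constructor
  · intro h
    obtain ⟨n, hnN, hn⟩ := exists_partialSups_eq (birkhoffSum T g · x) N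
    exact ⟨n, hnN, hn ▸ h⟩
  · rintro ⟨n, hnN, hn⟩
    exact hn.trans_le (le_partialSups_of_le (birkhoffSum T g · x) hnN)

lemma bddAbove_range_birkhoffSum_apply_iff (x : α) :
    BddAbove (range fun n => birkhoffSum T g n (T x)) ↔
      BddAbove (range fun n => birkhoffSum T g n x) := by
  constructor
  · rintro ⟨b, hb⟩
    refine ⟨max 0 (g x + b), forall_mem_range.2 fun n => ?_⟩
    cases n with
    | zero => simp
    | succ m =>
      rw [birkhoffSum_succ']
      exact le_max_of_le_right (by linarith [hb (mem_range_self m)])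
  · rintro ⟨b, hb⟩
    refine ⟨b - g x, forall_mem_range.2 fun n => ?_⟩
    have := hb (mem_range_self (n + 1))
    rw [birkhoffSum_succ'] at this
    linarith

lemma birkhoffSum_sub_const (a : ℝ) (n : ℕ) (x : α) :
    birkhoffSum T (fun y => g y - a) n x = birkhoffSum T g n x - n * a := by
  simp [birkhoffSum, Finset.sum_sub_distrib]

lemma birkhoffSum_const_sub (a : ℝ) (n : ℕ) (x : α) :
    birkhoffSum T (fun y => a - g y) n x = n * a - birkhoffSum T g n x := by
  simp [birkhoffSum, Finset.sum_sub_distrib]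

lemma abs_birkhoffAverage_iterate_sub_le {x : α} {c : ℝ}
    (hx : ∀ δ > 0, ∃ R, ∀ n : ℕ, |birkhoffSum T g n x - n * c| ≤ δ * n + R)
    {ε θ : ℝ} (hε : 0 < ε) (hθ : 0 < θ) :
    ∀ᶠ v in atTop, ∀ s w : ℕ, s + w = v → θ * v ≤ w →
      |birkhoffAverage ℝ T g w (T^[s] x) - c| ≤ ε := by
  obtain ⟨R, hR⟩ := hx (ε * θ / 4) (by positivity)
  filter_upwards [eventually_ge_atTop ⌈4 * R / (ε * θ)⌉₊, eventually_gt_atTop 0]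
    with v hvR hv0 s w hv hw
  subst hv
  have hsw : (0 : ℝ) < s + w := by exact_mod_cast hv0
  have hw0 : (0 : ℝ) < w := lt_of_lt_of_le (by push_cast; positivity) hw
  have hRv : 4 * R ≤ ε * θ * (s + w) := by
    have := (Nat.ceil_le.1 hvR)
    push_cast at this
    rw [div_le_iff₀ (by positivity)] at this
    linarith
  have hεw : ε * (θ * (s + w)) ≤ ε * w := by
    push_cast at hw
    exact mul_le_mul_of_nonneg_left hw hε.le
  have hsplit : birkhoffSum T g w (T^[s] x) - w * c =
      (birkhoffSum T g (s + w) x - (s + w : ℕ) * c) - (birkhoffSum T g s x - s * c) := by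
    rw [birkhoffSum_add]
    push_cast
    ring
  have hwin : |birkhoffSum T g w (T^[s] x) - w * c| ≤ ε * w := by
    rw [hsplit]
    have h₁ := hR (s + w)
    have h₂ := hR s
    have hθw : 0 ≤ ε * θ * w := by positivity
    calc _ ≤ _ := abs_sub _ _
      _ ≤ ε * w := by push_cast at h₁ ⊢; linarith
  rw [birkhoffAverage, smul_eq_mul, show (w : ℝ)⁻¹ * birkhoffSum T g w (T^[s] x) - c =
    (birkhoffSum T g w (T^[s] x) - w * c) / w by field_simp, abs_div, Nat.abs_cast,
    div_le_iff₀ hw0]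
  exact hwin

variable [MeasurableSpace α] {μ : Measure α}

lemma measurable_birkhoffSum (hT : Measurable T) (hg : Measurable g) (n : ℕ) :
    Measurable (birkhoffSum T g n) :=
  Finset.measurable_sum _ fun i _ => hg.comp (hT.iterate i)

lemma integrable_birkhoffSum (hT : MeasurePreserving T μ μ) (hgm : Measurable g)
    (hg : Integrable g μ) (n : ℕ) : Integrable (birkhoffSum T g n) μ :=
  integrable_finsetSum _ fun i _ =>
    ((hT.iterate i).integrable_comp hgm.aestronglyMeasurable).mpr hg

lemma measurable_partialSups_birkhoffSum (hT : Measurable T) (hg : Measurable g) (N : ℕ) :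
    Measurable (partialSups (birkhoffSum T g) N) := by
  induction N with
  | zero => exact measurable_birkhoffSum hT hg 0
  | succ N ih =>
    rw [partialSups_birkhoffSum_succ]
    exact ih.sup (measurable_birkhoffSum hT hg _)

lemma integrable_partialSups_birkhoffSum (hT : MeasurePreserving T μ μ) (hgm : Measurable g)
    (hg : Integrable g μ) (N : ℕ) : Integrable (partialSups (birkhoffSum T g) N) μ := by
  induction N with
  | zero => exact integrable_birkhoffSum hT hgm hg 0
  | succ N ih =>
    rw [partialSups_birkhoffSum_succ]
    exact ih.sup (integrable_birkhoffSum hT hgm hg _)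

/-- Garsia's proof: with `M := max_{n ≤ N} S_n ≥ 0`, one has `g ≥ M - M ∘ T` on `{M > 0}` and
`M - M ∘ T ≤ 0` off it, while `∫ (M - M ∘ T) = 0`. -/
theorem MeasureTheory.MeasurePreserving.maximal_ergodic (hT : MeasurePreserving T μ μ)
    (hgm : Measurable g) (hg : Integrable g μ) :
    0 ≤ ∫ x in {x | ∃ n, 0 < birkhoffSum T g n x}, g x ∂μ := by
  set E : ℕ → Set α := fun N => {x | 0 < partialSups (birkhoffSum T g) N x}
  have hEm (N : ℕ) : MeasurableSet (E N) :=
    measurableSet_lt measurable_const (measurable_partialSups_birkhoffSum hT.measurable hgm N)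
  have hEU : {x | ∃ n, 0 < birkhoffSum T g n x} = ⋃ N, E N := by
    ext x
    simp only [E, mem_ofPred_eq, mem_iUnion, lt_partialSups_birkhoffSum_iff]
    exact ⟨fun ⟨n, hn⟩ => ⟨n, n, le_rfl, hn⟩, fun ⟨_, n, _, hn⟩ => ⟨n, hn⟩⟩
  have hE_mono : Monotone E := fun N N' h x hx =>
    hx.trans_le ((partialSups (birkhoffSum T g)).monotone h x)
  have hstep (N : ℕ) : 0 ≤ ∫ x in E N, g x ∂μ := by
    set M := partialSups (birkhoffSum T g) N
    have hMi := integrable_partialSups_birkhoffSum hT hgm hg N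
    have hMTi : Integrable (fun x => M (T x)) μ :=
      (hT.integrable_comp hMi.aestronglyMeasurable).mpr hMi
    have hM0 (x : α) : 0 ≤ M x := by
      simpa using le_partialSups_of_le (birkhoffSum T g) (Nat.zero_le N) x
    have hint : ∫ x, (M x - M (T x)) ∂μ = 0 := by
      rw [integral_sub hMi hMTi, ← integral_map hT.aemeasurable
        (by rw [hT.map_eq]; exact hMi.aestronglyMeasurable), hT.map_eq, sub_self]
    calc (0 : ℝ) = ∫ x, (M x - M (T x)) ∂μ := hint.symm
      _ ≤ ∫ x in E N, (M x - M (T x)) ∂μ := by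
        rw [← integral_add_compl (f := fun x => M x - M (T x)) (hEm N) (hMi.sub hMTi)]
        refine add_le_of_nonpos_right (setIntegral_nonpos (hEm N).compl fun x hx => ?_)
        have : M x ≤ 0 := not_lt.mp hx
        linarith [hM0 (T x)]
      _ ≤ ∫ x in E N, g x ∂μ :=
        setIntegral_mono_on (hMi.sub hMTi).integrableOn hg.integrableOn (hEm N) fun x hx => by
          linarith [partialSups_birkhoffSum_le_add (T := T) (g := g) hx]
  rw [hEU]
  exact ge_of_tendsto' (tendsto_setIntegral_of_monotone hEm hE_mono hg.integrableOn) hstep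

theorem Ergodic.ae_bddAbove_birkhoffSum (hT : Ergodic T μ) (hgm : Measurable g)
    (hg : Integrable g μ) (hneg : ∫ x, g x ∂μ < 0) :
    ∀ᵐ x ∂μ, BddAbove (range fun n => birkhoffSum T g n x) := by
  have hAm : MeasurableSet {x | BddAbove (range fun n => birkhoffSum T g n x)} :=
    measurableSet_bddAbove_range (measurable_birkhoffSum hT.measurable hgm)
  refine (hT.ae_mem_or_ae_notMem hAm
    (ext fun x => bddAbove_range_birkhoffSum_apply_iff x)).resolve_right fun hA => ?_
  have hE : ∀ᵐ x ∂μ, x ∈ {x | ∃ n, 0 < birkhoffSum T g n x} := hA.mono fun x hx => by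
    by_contra h
    simp only [mem_ofPred_eq, not_exists, not_lt] at h
    exact hx ⟨0, forall_mem_range.2 h⟩
  have := hT.toMeasurePreserving.maximal_ergodic hgm hg
  rw [Measure.restrict_eq_self_of_ae_mem hE] at this
  linarith

variable [IsProbabilityMeasure μ]

theorem Ergodic.ae_abs_birkhoffSum_sub_le_of_pos (hT : Ergodic T μ) (hgm : Measurable g)
    (hg : Integrable g μ) {δ : ℝ} (hδ : 0 < δ) :
    ∀ᵐ x ∂μ, ∃ R, ∀ n : ℕ, |birkhoffSum T g n x - n * ∫ y, g y ∂μ| ≤ δ * n + R := by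
  set c := ∫ y, g y ∂μ
  have hsub (a : ℝ) : ∫ y, (g y - a) ∂μ = c - a := by
    simp [integral_sub hg (integrable_const a), c]
  have hsub' (a : ℝ) : ∫ y, (a - g y) ∂μ = a - c := by
    simp [integral_sub (integrable_const a) hg, c]
  have hup := hT.ae_bddAbove_birkhoffSum (g := fun y => g y - (c + δ)) (hgm.sub measurable_const)
    (hg.sub (integrable_const _)) (by rw [hsub]; linarith)
  have hdown := hT.ae_bddAbove_birkhoffSum (g := fun y => c - δ - g y) (measurable_const.sub hgm)
    ((integrable_const _).sub hg) (by rw [hsub']; linarith)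
  filter_upwards [hup, hdown] with x ⟨R₁, hR₁⟩ ⟨R₂, hR₂⟩
  refine ⟨max R₁ R₂, fun n => abs_le.2 ⟨?_, ?_⟩⟩
  · have := hR₂ (mem_range_self n)
    rw [birkhoffSum_const_sub] at this
    linarith [le_max_right R₁ R₂]
  · have := hR₁ (mem_range_self n)
    rw [birkhoffSum_sub_const] at this
    linarith [le_max_left R₁ R₂]

/-- Birkhoff's pointwise ergodic theorem, in the equivalent form `S_n g = n ∫ g + o(n)`. -/
theorem Ergodic.ae_forall_abs_birkhoffSum_sub_le (hT : Ergodic T μ) (hgm : Measurable g)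
    (hg : Integrable g μ) :
    ∀ᵐ x ∂μ, ∀ δ > 0, ∃ R, ∀ n : ℕ, |birkhoffSum T g n x - n * ∫ y, g y ∂μ| ≤ δ * n + R := by
  have h : ∀ᵐ x ∂μ, ∀ m : ℕ, ∃ R, ∀ n : ℕ,
      |birkhoffSum T g n x - n * ∫ y, g y ∂μ| ≤ 1 / (m + 1) * n + R :=
    ae_all_iff.2 fun m => hT.ae_abs_birkhoffSum_sub_le_of_pos hgm hg (by positivity)
  filter_upwards [h] with x hx δ hδ
  obtain ⟨m, hm⟩ := exists_nat_one_div_lt hδ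
  obtain ⟨R, hR⟩ := hx m
  exact ⟨R, fun n => (hR n).trans (by gcongr)⟩

theorem Ergodic.ae_eventually_abs_birkhoffAverage_iterate_sub_le (hT : Ergodic T μ)
    (hgm : Measurable g) (hg : Integrable g μ) {ε θ : ℝ} (hε : 0 < ε) (hθ : 0 < θ) :
    ∀ᵐ x ∂μ, ∀ᶠ v in atTop, ∀ s w : ℕ, s + w = v → θ * v ≤ w →
      |birkhoffAverage ℝ T g w (T^[s] x) - ∫ y, g y ∂μ| ≤ ε := by
  filter_upwards [hT.ae_forall_abs_birkhoffSum_sub_le hgm hg] with x hx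
  exact abs_birkhoffAverage_iterate_sub_le hx hε hθ

theorem Ergodic.ae_eventually_abs_birkhoffAverage_indicator_sub_le {ι : Type*} [Finite ι]
    (hT : Ergodic T μ) {S : ι → Set α} (hS : ∀ i, MeasurableSet (S i)) {ε θ : ℝ} (hε : 0 < ε)
    (hθ : 0 < θ) :
    ∀ᵐ x ∂μ, ∀ᶠ v in atTop, ∀ i (s w : ℕ), s + w = v → θ * v ≤ w →
      |birkhoffAverage ℝ T ((S i).indicator 1) w (T^[s] x) - μ.real (S i)| ≤ ε := by
  refine (ae_all_iff.2 fun i => ?_).mono fun x hx => eventually_all.2 hx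
  have := hT.ae_eventually_abs_birkhoffAverage_iterate_sub_le (measurable_one.indicator (hS i))
    ((integrable_const 1).indicator (hS i)) hε hθ
  rwa [integral_indicator_one (hS i)] at this

end Birkhoff

lemma shift_iterate (s : ℕ) (x : ℕ → ℝ) : shift^[s] x = fun i => x (s + i) := by
  induction s generalizing x with
  | zero => simp
  | succ s ih =>
    rw [Function.iterate_succ_apply, ih]
    ext i
    simp only [shift]
    ring_nf

lemma Cylinder.measurableSet (C : Cylinder) : MeasurableSet C.set := by
  simp only [Cylinder.set, ofPred_forall]
  exact .iInter fun j => (measurableSet_le measurable_const (measurable_pi_apply _)).inter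
    (measurableSet_le (measurable_pi_apply _) measurable_const)

lemma nu_eq_birkhoffAverage {n l : ℕ} (X : ℕ → ℝ) (S : Set (ℕ → ℝ)) (hl : 1 ≤ l) (hln : l ≤ n) :
    nu n X l S = birkhoffAverage ℝ shift (S.indicator 1) (n - l + 1) X := by
  rw [nu, if_pos ⟨hln, hl⟩, birkhoffAverage, birkhoffSum, smul_eq_mul, div_eq_inv_mul,
    Nat.cast_add, Nat.cast_sub hln, Nat.cast_one]
  simp only [shift_iterate]
  rfl

lemma le_sub_and_mul_le_of_le_mul {γ : ℝ} {k s l L : ℕ} (hs : (s : ℝ) ≤ γ * k) (hl : 1 ≤ l)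
    (hlL : l ≤ L) (hk : (L : ℝ) ≤ (1 - γ) / 2 * k) :
    l ≤ k - s ∧ (1 - γ) / 2 * ((s + (k - s - l + 1) : ℕ) : ℝ) ≤ ((k - s - l + 1 : ℕ) : ℝ) := by
  have hl₁ : (1 : ℝ) ≤ l := by exact_mod_cast hl
  have hlL' : (l : ℝ) ≤ L := by exact_mod_cast hlL
  have hθ : 0 < (1 - γ) / 2 := pos_of_mul_pos_left (by linarith) (Nat.cast_nonneg k)
  have hlsk : l + s ≤ k := by exact_mod_cast (by linarith : (l : ℝ) + s ≤ k)
  refine ⟨by omega, ?_⟩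
  have hw : ((k - s - l + 1 : ℕ) : ℝ) + s + l = k + 1 := by
    exact_mod_cast (by omega : k - s - l + 1 + s + l = k + 1)
  have hθk : (1 - γ) / 2 * ((s + (k - s - l + 1) : ℕ) : ℝ) ≤ (1 - γ) / 2 * k :=
    mul_le_mul_of_nonneg_left (by rw [Nat.cast_add]; linarith) hθ.le
  linarith

/-- Stationarity of shifted samples: any fixed shift of a stationary ergodic
process has the same distribution, and the empirical frequencies of finitely
many cylinders computed on the shifted samples converge uniformly over
linearly-bounded starting points. -/
theorem stmt18 (μ : Measure (ℕ → ℝ)) [IsProbabilityMeasure μ]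
    (hμ : Ergodic shift μ) :
    (∀ s : ℕ, μ.map (fun x i => x (s + i)) = μ) ∧
    (∀ (J : ℕ) (C : Fin J → Cylinder) (γ : ℝ), γ ∈ Set.Ioo (0 : ℝ) 1 →
      ∀ ε : ℝ, 0 < ε →
      ∀ᵐ x ∂μ, ∃ K : ℕ, ∀ k : ℕ, K < k → ∀ s : ℕ, (s : ℝ) ≤ γ * k → ∀ j : Fin J,
        |nu (k - s) (fun i => x (s + i)) (C j).dim (C j).set
            - (μ (C j).set).toReal| ≤ ε) := by
  refine ⟨fun s => ?_, fun J C γ hγ ε hε => ?_⟩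
  · rw [show (fun x i => x (s + i)) = shift^[s] from funext fun x => (shift_iterate s x).symm]
    exact (hμ.toMeasurePreserving.iterate s).map_eq
  have hθ : 0 < (1 - γ) / 2 := by linarith [hγ.2]
  filter_upwards [hμ.ae_eventually_abs_birkhoffAverage_indicator_sub_le
    (fun j => (C j).measurableSet) hε hθ] with x hx
  obtain ⟨V, hV⟩ := eventually_atTop.1 hx
  set L := Finset.univ.sup fun j => (C j).dim
  obtain ⟨K, hK⟩ := eventually_atTop.1 ((eventually_ge_atTop (V + L)).and
    ((tendsto_natCast_atTop_atTop.const_mul_atTop hθ).eventually_ge_atTop (L : ℝ)))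
  refine ⟨K, fun k hk s hs j => ?_⟩
  obtain ⟨hkV, hkL⟩ := hK k hk.le
  have hlL : (C j).dim ≤ L := Finset.le_sup (f := fun j => (C j).dim) (Finset.mem_univ j)
  obtain ⟨hlk, hθw⟩ := le_sub_and_mul_le_of_le_mul hs (C j).dimPos hlL hkL
  rw [← shift_iterate, nu_eq_birkhoffAverage _ _ (C j).dimPos hlk]
  exact hV _ (by omega) j s _ rfl hθw
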